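/- Let n, n_T, r be positive integers, τ ≠ 0 and β ≠ 0 real numbers, and M, M₁, N, K ∈ ℝ^{n×n} with M invertible (K not necessarily symmetric). Let Y₁ ∈ ℝ^{n×r}, Y₂ ∈ ℝ^{n_T×r}, Ŷ = Y₁Y₂ᵀ. Let C ∈ ℝ^{n_T×n_T} be the lower bidiagonal matrix with ones on the diagonal and −1 on the first subdiagonal, C̃ = (1/τ)C, and define the 2n_T × 2n_T block matrices C₁ = [[C̃ᵀ, 0], [0, C̃]], I₀ = [[0, I_{n_T}], [0, 0]], D = [[0, 0], [−(1/β)I_{n_T}, 0]], E₁ = [[I_{n_T}, 0], [0, 0]], E₂ = [[0, 0], [0, I_{n_T}]]. Define A₂ = M⁻¹M₁, A₃ = M⁻¹N M⁻¹Nᵀ, F₁ = M⁻¹M₁Y₁, and F₂ ∈ ℝ^{2n_T×r} whose first n_T rows are zero and whose last n_T rows equal Y₂. Then Y, Λ ∈ ℝ^{n×n_T} satisfy M⁻¹M₁Y + M⁻¹KᵀΛ + ΛC̃ − M⁻¹M₁Ŷ = 0 and M⁻¹KY + YC̃ᵀ − (1/β)M⁻¹NM⁻¹NᵀΛ = 0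 if and only if X = [Y, Λ] ∈ ℝ^{n×2n_T} satisfies M⁻¹K X E₁ + M⁻¹Kᵀ X E₂ + XC₁ + A₂XI₀ + A₃XD − F₁F₂ᵀ = 0. -/

import Mathlib

/-!
Right multiplication by the block matrices `E₁, E₂, C₁, I₀, D` acts block-column-wise on
`X = [Y, Λ]`, so the Sylvester equation for `X` is the pair of its two block columns: the first
is the state equation, the second the adjoint equation with `Ŷ = Y₁Y₂ᵀ` supplied by `F₁F₂ᵀ`.
-/

open Matrix

namespace Matrix

variable {R : Type*} {l n₁ n₂ : Type*}

lemma fromCols_add [Add R] (A₁ B₁ : Matrix l n₁ R) (A₂ B₂ : Matrix l n₂ R) :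
    fromCols A₁ A₂ + fromCols B₁ B₂ = fromCols (A₁ + B₁) (A₂ + B₂) := by
  ext i (j | j) <;> rfl

lemma fromCols_sub [Sub R] (A₁ B₁ : Matrix l n₁ R) (A₂ B₂ : Matrix l n₂ R) :
    fromCols A₁ A₂ - fromCols B₁ B₂ = fromCols (A₁ - B₁) (A₂ - B₂) := by
  ext i (j | j) <;> rfl

lemma generalizedSylvester_fromCols [Ring R] {m k r : Type*} [Fintype m] [Fintype k]
    [DecidableEq k] [Fintype r] (P Q A B : Matrix m m R) (S T G : Matrix k k R)
    (F : Matrix m r R) (Z : Matrix k r R) (Y Λ : Matrix m k R) :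
    P * fromCols Y Λ * (fromBlocks 1 0 0 0 : Matrix (k ⊕ k) (k ⊕ k) R)
        + Q * fromCols Y Λ * (fromBlocks 0 0 0 1 : Matrix (k ⊕ k) (k ⊕ k) R)
        + fromCols Y Λ * fromBlocks S 0 0 T
        + A * fromCols Y Λ * (fromBlocks 0 1 0 0 : Matrix (k ⊕ k) (k ⊕ k) R)
        + B * fromCols Y Λ * (fromBlocks 0 0 G 0 : Matrix (k ⊕ k) (k ⊕ k) R)
        - F * (fromRows 0 Z)ᵀ
      = fromCols (P * Y + Y * S + B * Λ * G) (Q * Λ + Λ * T + A * Y - F * Zᵀ) := by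
  simp only [transpose_fromRows, transpose_zero, mul_fromCols, fromCols_mul_fromBlocks,
    Matrix.mul_zero, Matrix.mul_one, add_zero, zero_add, fromCols_add, fromCols_sub,
    sub_zero]

end Matrix

theorem stmt_7_general (n nT r : ℕ) (β : ℝ)
    (M M1 N K : Matrix (Fin n) (Fin n) ℝ)
    (Y₁ : Matrix (Fin n) (Fin r) ℝ) (Y₂ : Matrix (Fin nT) (Fin r) ℝ)
    (Yhat : Matrix (Fin n) (Fin nT) ℝ) (hYhat : Yhat = Y₁ * Y₂ᵀ)
    (Ct : Matrix (Fin nT) (Fin nT) ℝ)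
    (C₁ I₀ D E₁ E₂ : Matrix (Fin nT ⊕ Fin nT) (Fin nT ⊕ Fin nT) ℝ)
    (hC₁ : C₁ = fromBlocks Ctᵀ 0 0 Ct)
    (hI₀ : I₀ = fromBlocks 0 1 0 0)
    (hD : D = fromBlocks 0 0 (-((1 / β) • (1 : Matrix (Fin nT) (Fin nT) ℝ))) 0)
    (hE₁ : E₁ = fromBlocks 1 0 0 0)
    (hE₂ : E₂ = fromBlocks 0 0 0 1)
    (A₂ A₃ : Matrix (Fin n) (Fin n) ℝ)
    (hA₂ : A₂ = M⁻¹ * M1) (hA₃ : A₃ = M⁻¹ * N * M⁻¹ * Nᵀ)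
    (F₁ : Matrix (Fin n) (Fin r) ℝ) (hF₁ : F₁ = M⁻¹ * M1 * Y₁)
    (F₂ : Matrix (Fin nT ⊕ Fin nT) (Fin r) ℝ) (hF₂ : F₂ = fromRows 0 Y₂)
    (Y Λ : Matrix (Fin n) (Fin nT) ℝ)
    (X : Matrix (Fin n) (Fin nT ⊕ Fin nT) ℝ) (hX : X = fromCols Y Λ) :
    (M⁻¹ * M1 * Y + M⁻¹ * Kᵀ * Λ + Λ * Ct - M⁻¹ * M1 * Yhat = 0 ∧
      M⁻¹ * K * Y + Y * Ctᵀ - (1 / β) • (M⁻¹ * N * M⁻¹ * Nᵀ * Λ) = 0)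
    ↔
    M⁻¹ * K * X * E₁ + M⁻¹ * Kᵀ * X * E₂ + X * C₁ + A₂ * X * I₀ + A₃ * X * D
      - F₁ * F₂ᵀ = 0 := by
  subst hYhat hC₁ hI₀ hD hE₁ hE₂ hA₂ hA₃ hF₁ hF₂ hX
  rw [generalizedSylvester_fromCols, ← fromCols_zero, fromCols_ext_iff, and_comm]
  have hadjoint : M⁻¹ * M1 * Y + M⁻¹ * Kᵀ * Λ + Λ * Ct - M⁻¹ * M1 * (Y₁ * Y₂ᵀ)
      = M⁻¹ * Kᵀ * Λ + Λ * Ct + M⁻¹ * M1 * Y - M⁻¹ * M1 * Y₁ * Y₂ᵀ := by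
    rw [Matrix.mul_assoc (M⁻¹ * M1)]
    abel
  have hstate : M⁻¹ * K * Y + Y * Ctᵀ - (1 / β) • (M⁻¹ * N * M⁻¹ * Nᵀ * Λ)
      = M⁻¹ * K * Y + Y * Ctᵀ
          + M⁻¹ * N * M⁻¹ * Nᵀ * Λ * -((1 / β) • (1 : Matrix (Fin nT) (Fin nT) ℝ)) := by
    rw [Matrix.mul_neg, Matrix.mul_smul, Matrix.mul_one, sub_eq_add_neg]
  rw [hadjoint, hstate]

/-- Reformulation of the reduced KKT system with non-symmetric stiffness
matrix `K` as the generalized Sylvester matrix equation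
`M⁻¹K X E₁ + M⁻¹Kᵀ X E₂ + XC₁ + A₂XI₀ + A₃XD − F₁F₂ᵀ = 0` for `X = [Y, Λ]`. -/
theorem stmt_7 (n nT r : ℕ) (hn : 0 < n) (hnT : 0 < nT) (hr : 0 < r)
    (τ β : ℝ) (hτ : τ ≠ 0) (hβ : β ≠ 0)
    (M M1 N K : Matrix (Fin n) (Fin n) ℝ)
    (hMinv : IsUnit M.det)
    (Y₁ : Matrix (Fin n) (Fin r) ℝ) (Y₂ : Matrix (Fin nT) (Fin r) ℝ)
    (Yhat : Matrix (Fin n) (Fin nT) ℝ) (hYhat : Yhat = Y₁ * Y₂ᵀ)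
    (C : Matrix (Fin nT) (Fin nT) ℝ)
    (hC : ∀ t s : Fin nT, C t s =
      if t = s then 1 else if (t : ℕ) = (s : ℕ) + 1 then -1 else 0)
    (Ct : Matrix (Fin nT) (Fin nT) ℝ) (hCt : Ct = (1 / τ) • C)
    (C₁ I₀ D E₁ E₂ : Matrix (Fin nT ⊕ Fin nT) (Fin nT ⊕ Fin nT) ℝ)
    (hC₁ : C₁ = fromBlocks Ctᵀ 0 0 Ct)
    (hI₀ : I₀ = fromBlocks 0 1 0 0)
    (hD : D = fromBlocks 0 0 (-((1 / β) • (1 : Matrix (Fin nT) (Fin nT) ℝ))) 0)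
    (hE₁ : E₁ = fromBlocks 1 0 0 0)
    (hE₂ : E₂ = fromBlocks 0 0 0 1)
    (A₂ A₃ : Matrix (Fin n) (Fin n) ℝ)
    (hA₂ : A₂ = M⁻¹ * M1) (hA₃ : A₃ = M⁻¹ * N * M⁻¹ * Nᵀ)
    (F₁ : Matrix (Fin n) (Fin r) ℝ) (hF₁ : F₁ = M⁻¹ * M1 * Y₁)
    (F₂ : Matrix (Fin nT ⊕ Fin nT) (Fin r) ℝ) (hF₂ : F₂ = fromRows 0 Y₂)
    (Y Λ : Matrix (Fin n) (Fin nT) ℝ)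
    (X : Matrix (Fin n) (Fin nT ⊕ Fin nT) ℝ) (hX : X = fromCols Y Λ) :
    (M⁻¹ * M1 * Y + M⁻¹ * Kᵀ * Λ + Λ * Ct - M⁻¹ * M1 * Yhat = 0 ∧
      M⁻¹ * K * Y + Y * Ctᵀ - (1 / β) • (M⁻¹ * N * M⁻¹ * Nᵀ * Λ) = 0)
    ↔
    M⁻¹ * K * X * E₁ + M⁻¹ * Kᵀ * X * E₂ + X * C₁ + A₂ * X * I₀ + A₃ * X * D
      - F₁ * F₂ᵀ = 0 :=
  stmt_7_general n nT r β M M1 N K Y₁ Y₂ Yhat hYhat Ct C₁ I₀ D E₁ E₂ hC₁ hI₀ hD hE₁ hE₂ A₂ A₃ hA₂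
    hA₃ F₁ hF₁ F₂ hF₂ Y Λ X hX
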